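/- arXiv:2302.08636 — 4 statements merged into one kernel-verified Lean document; each statement's English description precedes it below -/
import Mathlib

section
/- If the bilinear form b satisfies the inf-sup condition sup_{v ≠ 0} |b(u,v)|/‖v‖_V ≥ γ‖u‖_U for all u ∈ U with γ > 0, and U_h ⊆ U is any subspace with optimal test space V_h^{opt} = T(U_h), then the discrete inf-sup condition holds with the same constant: for all u_h ∈ U_h, sup_{v_h ∈ V_h^{opt}, v_h ≠ 0} |b(u_h, v_h)|/‖v_h‖_V ≥ γ‖u_h‖_U. -/
open RealInnerProductSpace

/-- If `b` satisfies the inf-sup condition with constant `γ > 0`, then for any subspace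
`U_h ⊆ U` the discrete inf-sup condition holds with the same constant over the
optimal test space `V_h^opt = T(U_h)`. -/
theorem discrete_inf_sup_with_optimal_test_space
    (U V : Type*) [NormedAddCommGroup U] [InnerProductSpace ℝ U]
    [NormedAddCommGroup V] [InnerProductSpace ℝ V]
    (b : U →L[ℝ] V →L[ℝ] ℝ) (T : U → V)
    (hT : ∀ (u : U) (v : V), ⟪T u, v⟫ = b u v)
    (γ : ℝ) (hγ : 0 < γ)
    (hinfsup : ∀ u : U, γ * ‖u‖ ≤ sSup {r : ℝ | ∃ v : V, v ≠ 0 ∧ r = |b u v| / ‖v‖})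
    (Uh : Submodule ℝ U) :
    ∀ uh ∈ Uh,
      γ * ‖uh‖ ≤ sSup {r : ℝ | ∃ vh : V, vh ∈ T '' (Uh : Set U) ∧ vh ≠ 0 ∧
        r = |b uh vh| / ‖vh‖} := by
  intro uh huh
  -- Cauchy-Schwarz bound: each ratio is ≤ ‖T uh‖
  have hbound : ∀ v : V, v ≠ 0 → |b uh v| / ‖v‖ ≤ ‖T uh‖ := by
    intro v hv
    rw [div_le_iff₀ (norm_pos_iff.mpr hv)]
    rw [← hT]
    exact abs_real_inner_le_norm _ _
  by_cases hTz : T uh = 0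
  · -- then the full sup is 0, so uh = 0
    have h0 : ∀ v : V, b uh v = 0 := by
      intro v
      rw [← hT, hTz, inner_zero_left]
    have hsup0 : sSup {r : ℝ | ∃ v : V, v ≠ 0 ∧ r = |b uh v| / ‖v‖} ≤ 0 := by
      apply Real.sSup_le _ le_rfl
      rintro r ⟨v, hv, rfl⟩
      simp [h0]
    have huz : ‖uh‖ ≤ 0 := by
      have := (hinfsup uh).trans hsup0
      nlinarith
    have : uh = 0 := norm_le_zero_iff.mp huz
    subst this
    simp only [norm_zero, mul_zero]
    apply Real.sSup_nonneg
    rintro r ⟨v, _, hv, rfl⟩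
    positivity
  · -- T uh ≠ 0 : the sup is attained at v = T uh
    have hTn : 0 < ‖T uh‖ := norm_pos_iff.mpr hTz
    have hval : |b uh (T uh)| / ‖T uh‖ = ‖T uh‖ := by
      rw [← hT, real_inner_self_eq_norm_mul_norm]
      rw [abs_of_nonneg (by positivity)]
      field_simp
    have hmem : ‖T uh‖ ∈ {r : ℝ | ∃ vh : V, vh ∈ T '' (Uh : Set U) ∧ vh ≠ 0 ∧
        r = |b uh vh| / ‖vh‖} := ⟨T uh, ⟨uh, huh, rfl⟩, hTz, hval.symm⟩
    have hbdd : BddAbove {r : ℝ | ∃ vh : V, vh ∈ T '' (Uh : Set U) ∧ vh ≠ 0 ∧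
        r = |b uh vh| / ‖vh‖} := by
      refine ⟨‖T uh‖, ?_⟩
      rintro r ⟨v, _, hv, rfl⟩
      exact hbound v hv
    have h1 : γ * ‖uh‖ ≤ ‖T uh‖ := by
      refine (hinfsup uh).trans (Real.sSup_le ?_ hTn.le)
      rintro r ⟨v, hv, rfl⟩
      exact hbound v hv
    exact h1.trans (le_csSup hbdd hmem)
end

section
/- The DPG solution is a residual minimizer: u_h ∈ U_h satisfies b(u_h, Tw) = l(Tw) for all w ∈ U_h if and only if u_h minimizes ‖R_V^{-1}(l - B u)‖_V over u ∈ U_h, where l ∈ V' and B is the operator induced by b. -/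
open RealInnerProductSpace

/-!
Writing `r = R_V⁻¹ l`, the residual is `R_V⁻¹(l - B u) = r - T u`, so minimizing it over `U_h` is
best approximation of `r` from the subspace `T U_h`. A best approximation from a subspace is
characterized by orthogonality of the error to the subspace, `⟪r - T u_h, T w⟫ = 0`, and by the
Riesz identity `⟪R_V⁻¹ f, v⟫ = f v` this orthogonality reads `l (T w) - b(u_h, T w) = 0`.
-/

theorem Submodule.forall_norm_sub_le_iff_forall_inner_eq_zero {F : Type*} [NormedAddCommGroup F]
    [InnerProductSpace ℝ F] (K : Submodule ℝ F) {u v : F} (hv : v ∈ K) :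
    (∀ w ∈ K, ‖u - v‖ ≤ ‖u - w‖) ↔ ∀ w ∈ K, ⟪u - v, w⟫ = 0 := by
  have : Nonempty (K : Set F) := ⟨⟨v, hv⟩⟩
  have hbdd : BddBelow (Set.range fun w : (K : Set F) => ‖u - w‖) :=
    ⟨0, Set.forall_mem_range.2 fun _ => norm_nonneg _⟩
  rw [← norm_eq_iInf_iff_real_inner_eq_zero K hv]
  constructor
  · intro h
    exact le_antisymm (le_ciInf fun w => h w w.2) (ciInf_le hbdd ⟨v, hv⟩)
  · intro h w hw
    rw [h]
    exact ciInf_le hbdd ⟨w, hw⟩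

theorem LinearMap.forall_norm_sub_le_iff_forall_inner_eq_zero {E F : Type*} [AddCommGroup E]
    [Module ℝ E] [NormedAddCommGroup F] [InnerProductSpace ℝ F] (A : E →ₗ[ℝ] F)
    (S : Submodule ℝ E) (r : F) {x : E} (hx : x ∈ S) :
    (∀ y ∈ S, ‖r - A x‖ ≤ ‖r - A y‖) ↔ ∀ y ∈ S, ⟪r - A x, A y⟫ = 0 := by
  have h := (S.map A).forall_norm_sub_le_iff_forall_inner_eq_zero (u := r)
    (Submodule.mem_map_of_mem hx)
  simpa only [Submodule.mem_map, forall_exists_index, and_imp, forall_apply_eq_imp_iff₂] using h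

noncomputable def trialToTest {U V : Type*} [NormedAddCommGroup U] [InnerProductSpace ℝ U]
    [NormedAddCommGroup V] [InnerProductSpace ℝ V] [CompleteSpace V]
    (b : U →L[ℝ] V →L[ℝ] ℝ) : U →ₗ[ℝ] V where
  toFun u := (InnerProductSpace.toDual ℝ V).symm (b u)
  map_add' u u' := by simp only [map_add]
  map_smul' c u := by simp only [map_smul, RingHom.id_apply]

theorem dpg_iff_residual_minimizer_general
    (U V : Type*) [NormedAddCommGroup U] [InnerProductSpace ℝ U]
    [NormedAddCommGroup V] [InnerProductSpace ℝ V] [CompleteSpace V]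
    (b : U →L[ℝ] V →L[ℝ] ℝ) (l : V →L[ℝ] ℝ)
    (T : U → V) (hT : ∀ u : U, T u = (InnerProductSpace.toDual ℝ V).symm (b u))
    (Uh : Submodule ℝ U)
    (uh : U) (huh : uh ∈ Uh) :
    (∀ w ∈ Uh, b uh (T w) = l (T w)) ↔
      (∀ u ∈ Uh,
        ‖(InnerProductSpace.toDual ℝ V).symm (l - b uh)‖ ≤
          ‖(InnerProductSpace.toDual ℝ V).symm (l - b u)‖) := by
  set R := (InnerProductSpace.toDual ℝ V).symm
  have hT' : ∀ u, T u = trialToTest b u := hT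
  have hresidual : ∀ u, R (l - b u) = R l - trialToTest b u := fun u => map_sub R l (b u)
  have hnormal : ∀ w, ⟪R l - trialToTest b uh, trialToTest b w⟫ = 0 ↔ b uh (T w) = l (T w) := by
    intro w
    rw [← hT', ← hT', hT uh, inner_sub_left, InnerProductSpace.toDual_symm_apply,
      InnerProductSpace.toDual_symm_apply, sub_eq_zero, eq_comm]
  simp only [hresidual,
    (trialToTest b).forall_norm_sub_le_iff_forall_inner_eq_zero Uh (R l) huh, hnormal]

/-- The DPG solution is a residual minimizer: `u_h ∈ U_h` satisfies
`b(u_h, Tw) = l(Tw)` for all `w ∈ U_h` iff `u_h` minimizes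
`‖R_V⁻¹(l − B u)‖_V` over `u ∈ U_h`. -/
theorem dpg_iff_residual_minimizer
    (U V : Type*) [NormedAddCommGroup U] [InnerProductSpace ℝ U]
    [NormedAddCommGroup V] [InnerProductSpace ℝ V] [CompleteSpace V]
    (b : U →L[ℝ] V →L[ℝ] ℝ) (l : V →L[ℝ] ℝ)
    (T : U → V) (hT : ∀ u : U, T u = (InnerProductSpace.toDual ℝ V).symm (b u))
    (Uh : Submodule ℝ U) [FiniteDimensional ℝ Uh]
    (uh : U) (huh : uh ∈ Uh) :
    (∀ w ∈ Uh, b uh (T w) = l (T w)) ↔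
      (∀ u ∈ Uh,
        ‖(InnerProductSpace.toDual ℝ V).symm (l - b uh)‖ ≤
          ‖(InnerProductSpace.toDual ℝ V).symm (l - b u)‖) :=
  dpg_iff_residual_minimizer_general U V b l T hT Uh uh huh
end

section
/- If b satisfies the inf-sup condition with constant γ > 0 and is bounded with constant M, then the DPG solution u_h ∈ U_h satisfies the quasi-optimal error estimate ‖u − u_h‖_U ≤ (M/γ) inf_{w_h ∈ U_h} ‖u − w_h‖_U, where u ∈ U is the exact solution of b(u,v) = l(v) for all v ∈ V. -/
open RealInnerProductSpace

/-- Quasi-optimality of the DPG solution: if `b` is bounded with constant `M` and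
satisfies the inf-sup condition with constant `γ > 0`, then
`‖u − u_h‖ ≤ (M/γ) inf_{w_h ∈ U_h} ‖u − w_h‖`. -/
theorem dpg_quasi_optimality
    (U V : Type*) [NormedAddCommGroup U] [InnerProductSpace ℝ U]
    [NormedAddCommGroup V] [InnerProductSpace ℝ V]
    (b : U →L[ℝ] V →L[ℝ] ℝ) (l : V →L[ℝ] ℝ)
    (T : U → V) (hT : ∀ (u : U) (v : V), ⟪T u, v⟫ = b u v)
    (M γ : ℝ) (hγ : 0 < γ)
    (hbound : ∀ (u : U) (v : V), |b u v| ≤ M * ‖u‖ * ‖v‖)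
    (hinfsup : ∀ u : U, γ * ‖u‖ ≤ sSup {r : ℝ | ∃ v : V, v ≠ 0 ∧ r = |b u v| / ‖v‖})
    (Uh : Submodule ℝ U) (hUhclosed : IsClosed (Uh : Set U))
    (u : U) (hu : ∀ v : V, b u v = l v)
    (uh : U) (huh : uh ∈ Uh)
    (hdpg : ∀ w ∈ Uh, b uh (T w) = l (T w)) :
    ‖u - uh‖ ≤ (M / γ) * sInf {r : ℝ | ∃ wh ∈ Uh, r = ‖u - wh‖} := by
  -- T is compatible with subtraction
  have hTsub : ∀ x y : U, T (x - y) = T x - T y := by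
    intro x y
    apply ext_inner_right ℝ
    intro v
    rw [inner_sub_left, hT, hT, hT]
    simp
  -- γ‖x‖ ≤ ‖T x‖ for all x
  have hA : ∀ x : U, γ * ‖x‖ ≤ ‖T x‖ := by
    intro x
    refine le_trans (hinfsup x) (Real.sSup_le ?_ (norm_nonneg _))
    rintro r ⟨v, hv, rfl⟩
    have hv' : 0 < ‖v‖ := norm_pos_iff.mpr hv
    rw [div_le_iff₀ hv', ← hT]
    exact abs_real_inner_le_norm _ _
  -- ‖T x‖² ≤ M ‖x‖ ‖T x‖
  have hB : ∀ x : U, ‖T x‖ * ‖T x‖ ≤ M * ‖x‖ * ‖T x‖ := by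
    intro x
    have h1 : ‖T x‖ * ‖T x‖ = ⟪T x, T x⟫ := (real_inner_self_eq_norm_mul_norm (T x)).symm
    rw [h1, hT]
    exact le_trans (le_abs_self _) (hbound x (T x))
  -- Galerkin orthogonality
  have hG : ∀ w ∈ Uh, ⟪T (u - uh), T w⟫ = 0 := by
    intro w hw
    rw [hT]
    have : b (u - uh) (T w) = b u (T w) - b uh (T w) := by simp
    rw [this, hu, hdpg w hw, sub_self]
  -- key pointwise estimate
  have hkey : ∀ wh ∈ Uh, γ * ‖u - uh‖ ≤ M * ‖u - wh‖ := by
    intro wh hwh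
    have hmem : wh - uh ∈ Uh := Uh.sub_mem hwh huh
    have hdecomp : T (u - wh) = T (u - uh) - T (wh - uh) := by
      rw [hTsub, hTsub, hTsub]; abel
    have horth := hG (wh - uh) hmem
    -- Pythagoras: ‖T(u-uh)‖ ≤ ‖T(u-wh)‖
    have hpyth : ‖T (u - uh)‖ ≤ ‖T (u - wh)‖ := by
      have h2 : ‖T (u - wh)‖ ^ 2 = ‖T (u - uh)‖ ^ 2 + ‖T (wh - uh)‖ ^ 2 := by
        rw [hdecomp, norm_sub_sq_real, horth]; ring
      nlinarith [norm_nonneg (T (u - uh)), norm_nonneg (T (u - wh)),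
        sq_nonneg (‖T (wh - uh)‖)]
    have h1 := hA (u - uh)
    have h2 := hA (u - wh)
    have h3 := hB (u - wh)
    rcases eq_or_lt_of_le (norm_nonneg (T (u - wh))) with h0 | h0
    · -- ‖T(u-wh)‖ = 0 : degenerate case
      have he : γ * ‖u - uh‖ ≤ 0 := by rw [← h0] at hpyth; linarith
      have hw : ‖u - wh‖ = 0 := by
        have := h2
        rw [← h0] at this
        nlinarith [norm_nonneg (u - wh)]
      have : ‖u - uh‖ = 0 := by nlinarith [norm_nonneg (u - uh)]
      rw [this, hw]; simp
    · -- ‖T(u-wh)‖ > 0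
      have hM : ‖T (u - wh)‖ ≤ M * ‖u - wh‖ := by
        have := h3
        exact le_of_mul_le_mul_right (by nlinarith) h0
      linarith
  -- assemble with the infimum
  set S : Set ℝ := {r : ℝ | ∃ wh ∈ Uh, r = ‖u - wh‖} with hS
  have hSne : S.Nonempty := ⟨‖u - uh‖, uh, huh, rfl⟩
  have hSbdd : BddBelow S := ⟨0, by rintro r ⟨wh, hwh, rfl⟩; exact norm_nonneg _⟩
  have hmain : γ * ‖u - uh‖ ≤ M * sInf S := by
    rcases le_or_gt M 0 with hM | hM
    · -- M ≤ 0 forces u = uh and sInf S = 0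
      have h0 := hkey uh huh
      have he : ‖u - uh‖ = 0 := by nlinarith [norm_nonneg (u - uh)]
      have h0S : (0 : ℝ) ∈ S := ⟨uh, huh, he.symm⟩
      have hinf1 : sInf S ≤ 0 := csInf_le hSbdd h0S
      have hinf2 : 0 ≤ sInf S := le_csInf hSne (by rintro r ⟨wh, hwh, rfl⟩; exact norm_nonneg _)
      have : sInf S = 0 := le_antisymm hinf1 hinf2
      rw [he, this]; simp
    · -- M > 0
      have : γ * ‖u - uh‖ / M ≤ sInf S := by
        apply le_csInf hSne
        rintro r ⟨wh, hwh, rfl⟩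
        rw [div_le_iff₀ hM, mul_comm _ M]
        exact hkey wh hwh
      have h4 : M * (γ * ‖u - uh‖ / M) ≤ M * sInf S :=
        mul_le_mul_of_nonneg_left this hM.le
      have h5 : M * (γ * ‖u - uh‖ / M) = γ * ‖u - uh‖ := by field_simp
      linarith
  rw [div_mul_eq_mul_div, le_div_iff₀ hγ]
  linarith
end

section
/- Let a : H × H → ℝ be a continuous and coercive bilinear form on a Hilbert space H, K ⊆ H a nonempty closed convex set, and l ∈ H'. Then the variational inequality: find u ∈ K with a(u, v − u) ≥ l(v − u) for all v ∈ K, has a unique solution (Lions–Stampacchia). -/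
open scoped RealInnerProductSpace

set_option maxHeartbeats 2000000 in
/-- Lions–Stampacchia: a continuous coercive bilinear form on a Hilbert space and a
nonempty closed convex set `K` yield a unique solution of the variational
inequality `a(u, v − u) ≥ l(v − u)` for all `v ∈ K`. -/
theorem lions_stampacchia
    (H : Type*) [NormedAddCommGroup H] [InnerProductSpace ℝ H] [CompleteSpace H]
    (a : H →L[ℝ] H →L[ℝ] ℝ) (l : H →L[ℝ] ℝ)
    (α : ℝ) (hα : 0 < α) (hcoer : ∀ u : H, α * ‖u‖ ^ 2 ≤ a u u)
    (K : Set H) (hne : K.Nonempty) (hclosed : IsClosed K) (hconvex : Convex ℝ K) :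
    ∃! u : H, u ∈ K ∧ ∀ v ∈ K, l (v - u) ≤ a u (v - u) := by
  classical
  -- Riesz representations
  set A : H → H := fun u => (InnerProductSpace.toDual ℝ H).symm (a u) with hA
  have hAinner : ∀ u v : H, ⟪A u, v⟫ = a u v := fun u v =>
    InnerProductSpace.toDual_symm_apply
  set L : H := (InnerProductSpace.toDual ℝ H).symm l with hL
  have hLinner : ∀ v : H, ⟪L, v⟫ = l v := fun v => InnerProductSpace.toDual_symm_apply
  have hAnorm : ∀ u : H, ‖A u‖ = ‖a u‖ := fun u =>
    (InnerProductSpace.toDual ℝ H).symm.norm_map (a u)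
  -- constants
  set M : ℝ := max ‖a‖ α + 1 with hM
  have hMpos : 0 < M := by positivity
  have hαM : α < M := lt_of_le_of_lt (le_max_right _ _) (lt_add_one _)
  have hAle : ∀ u : H, ‖A u‖ ≤ M * ‖u‖ := by
    intro u
    rw [hAnorm]
    calc ‖a u‖ ≤ ‖a‖ * ‖u‖ := a.le_opNorm u
    _ ≤ M * ‖u‖ := by
        apply mul_le_mul_of_nonneg_right _ (norm_nonneg u)
        calc ‖a‖ ≤ max ‖a‖ α := le_max_left _ _
        _ ≤ M := le_of_lt (lt_add_one _)
  set ρ : ℝ := α / M ^ 2 with hρ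
  have hρpos : 0 < ρ := by positivity
  set c : ℝ := 1 - α ^ 2 / M ^ 2 with hc
  have hc0 : 0 ≤ c := by
    rw [hc, sub_nonneg, div_le_one (by positivity)]
    exact pow_le_pow_left₀ hα.le hαM.le 2
  have hc1 : c < 1 := by
    rw [hc]
    have : 0 < α ^ 2 / M ^ 2 := by positivity
    linarith
  -- the contraction key estimate
  have key : ∀ d : H, ‖d - ρ • A d‖ ^ 2 ≤ c * ‖d‖ ^ 2 := by
    intro d
    have h1 : ‖d - ρ • A d‖ ^ 2 = ‖d‖ ^ 2 - 2 * ⟪d, ρ • A d⟫ + ‖ρ • A d‖ ^ 2 := by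
      rw [@norm_sub_sq_real]
    have h2 : ⟪d, ρ • A d⟫ = ρ * (a d d) := by
      rw [real_inner_smul_right, real_inner_comm, hAinner]
    have h3 : ‖ρ • A d‖ ^ 2 ≤ ρ ^ 2 * (M ^ 2 * ‖d‖ ^ 2) := by
      rw [norm_smul]
      have : ‖A d‖ ^ 2 ≤ (M * ‖d‖) ^ 2 :=
        pow_le_pow_left₀ (norm_nonneg _) (hAle d) 2
      calc (‖ρ‖ * ‖A d‖) ^ 2 = ‖ρ‖ ^ 2 * ‖A d‖ ^ 2 := by ring
      _ ≤ ‖ρ‖ ^ 2 * (M * ‖d‖) ^ 2 := by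
          exact mul_le_mul_of_nonneg_left this (by positivity)
      _ = ρ ^ 2 * (M ^ 2 * ‖d‖ ^ 2) := by
          rw [Real.norm_eq_abs, sq_abs]; ring
    have h4 : ρ * (α * ‖d‖ ^ 2) ≤ ρ * (a d d) :=
      mul_le_mul_of_nonneg_left (hcoer d) hρpos.le
    have hMne : M ^ 2 ≠ 0 := by positivity
    have hcval : 1 - 2 * (ρ * α) + ρ ^ 2 * M ^ 2 = c := by
      rw [hρ, hc]; field_simp; ring
    calc ‖d - ρ • A d‖ ^ 2 = ‖d‖ ^ 2 - 2 * (ρ * a d d) + ‖ρ • A d‖ ^ 2 := by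
          rw [h1, h2]
    _ ≤ ‖d‖ ^ 2 - 2 * (ρ * (α * ‖d‖ ^ 2)) + ρ ^ 2 * (M ^ 2 * ‖d‖ ^ 2) := by
        linarith
    _ = (1 - 2 * (ρ * α) + ρ ^ 2 * M ^ 2) * ‖d‖ ^ 2 := by ring
    _ = c * ‖d‖ ^ 2 := by rw [hcval]
  -- projection onto K
  have hcomplete : IsComplete K := hclosed.isComplete
  have projEx : ∀ x : H, ∃ p ∈ K, ∀ w ∈ K, ⟪x - p, w - p⟫ ≤ 0 := by
    intro x
    obtain ⟨p, hpK, hp⟩ := exists_norm_eq_iInf_of_complete_convex hne hcomplete hconvex x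
    exact ⟨p, hpK, (norm_eq_iInf_iff_real_inner_le_zero hconvex hpK).1 hp⟩
  choose P hPmem hPchar using projEx
  -- nonexpansive
  have Pnonexp : ∀ x y : H, ‖P x - P y‖ ≤ ‖x - y‖ := by
    intro x y
    have h1 := hPchar x (P y) (hPmem y)
    have h2 := hPchar y (P x) (hPmem x)
    have h2' : ⟪P y - y, P y - P x⟫ ≤ 0 := by
      rw [show (P y - y : H) = -(y - P y) by abel,
        show (P y - P x : H) = -(P x - P y) by abel, inner_neg_neg]
      exact h2
    have hadd : ⟪(x - P x) + (P y - y), P y - P x⟫ ≤ 0 := by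
      rw [inner_add_left]; linarith
    have hre : (x - P x) + (P y - y) = (x - y) + (P y - P x) := by abel
    rw [hre, inner_add_left, real_inner_self_eq_norm_sq] at hadd
    have h3 : ⟪x - y, P y - P x⟫ = -⟪x - y, P x - P y⟫ := by
      rw [show (P y - P x : H) = -(P x - P y) by abel, inner_neg_right]
    have h4 : ‖P y - P x‖ = ‖P x - P y‖ := norm_sub_rev _ _
    have hsum : ‖P x - P y‖ ^ 2 ≤ ⟪x - y, P x - P y⟫ := by
      rw [h3, h4] at hadd; linarith
    rcases eq_or_lt_of_le (norm_nonneg (P x - P y)) with h | h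
    · rw [← h]; exact norm_nonneg _
    · have := hsum.trans (real_inner_le_norm (x - y) (P x - P y))
      rw [sq] at this
      exact le_of_mul_le_mul_right (by linarith [mul_comm ‖x - y‖ ‖P x - P y‖]) h
  -- the contraction map on K
  haveI : Nonempty K := hne.to_subtype
  haveI : CompleteSpace K := hcomplete.completeSpace_coe
  set g : H → H := fun u => u - ρ • (A u - L) with hg
  set T : K → K := fun x => ⟨P (g x), hPmem (g x)⟩ with hT
  set k : NNReal := Real.toNNReal (Real.sqrt c) with hk
  have hk1 : (k : ℝ) = Real.sqrt c := Real.coe_toNNReal _ (Real.sqrt_nonneg c)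
  have hklt : k < 1 := by
    rw [← NNReal.coe_lt_coe, hk1, NNReal.coe_one]
    calc Real.sqrt c < Real.sqrt 1 :=
      (Real.sqrt_lt_sqrt hc0 hc1)
    _ = 1 := Real.sqrt_one
  have hcontr : ContractingWith k T := by
    refine ⟨hklt, LipschitzWith.of_dist_le_mul ?_⟩
    intro x y
    have hdist : dist (T x) (T y) = ‖P (g x) - P (g y)‖ := by
      rw [Subtype.dist_eq, dist_eq_norm]
    rw [hdist]
    have hgxy : g x - g y = (x - y : H) - ρ • A ((x : H) - y) := by
      have hAsub : A ((x : H) - y) = A x - A y := by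
        simp only [hA, map_sub]
      show ((x : H) - ρ • (A x - L)) - ((y : H) - ρ • (A y - L)) = _
      rw [hAsub, smul_sub, smul_sub, smul_sub]
      abel
    have h1 : ‖P (g x) - P (g y)‖ ≤ ‖g x - g y‖ := Pnonexp _ _
    have h2 : ‖g x - g y‖ ≤ Real.sqrt c * ‖(x : H) - y‖ := by
      rw [hgxy]
      have hsq := key ((x : H) - y)
      have : ‖(x : H) - y - ρ • A ((x : H) - y)‖ ≤ Real.sqrt (c * ‖(x : H) - y‖ ^ 2) := by
        rw [← Real.sqrt_sq (norm_nonneg _)]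
        exact Real.sqrt_le_sqrt hsq
      rwa [Real.sqrt_mul hc0, Real.sqrt_sq (norm_nonneg _)] at this
    calc ‖P (g x) - P (g y)‖ ≤ Real.sqrt c * ‖(x : H) - y‖ := h1.trans h2
    _ = (k : ℝ) * dist x y := by rw [hk1, Subtype.dist_eq, dist_eq_norm]
  -- fixed point
  obtain ⟨u0, hfix⟩ : ∃ x : K, T x = x := ⟨_, hcontr.fixedPoint_isFixedPt⟩
  have hPeq : P (g (u0 : H)) = (u0 : H) := congrArg Subtype.val hfix
  have hVI : ∀ v ∈ K, l (v - (u0 : H)) ≤ a u0 (v - (u0 : H)) := by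
    intro v hv
    have hchar := hPchar (g (u0 : H)) v hv
    rw [hPeq] at hchar
    have hdiff : g (u0 : H) - (u0 : H) = -(ρ • (A u0 - L)) := by
      simp only [hg]; abel
    rw [hdiff, inner_neg_left, real_inner_smul_left, inner_sub_left,
      hAinner, hLinner] at hchar
    have hx : ρ * 0 ≤ ρ * (a u0 (v - (u0 : H)) - l (v - (u0 : H))) := by linarith
    linarith [le_of_mul_le_mul_left hx hρpos]
  refine ⟨(u0 : H), ⟨u0.2, hVI⟩, ?_⟩
  rintro y ⟨hyK, hy⟩
  have h1 := hy (u0 : H) u0.2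
  have h2 := hVI y hyK
  have e1 : l ((u0 : H) - y) + l (y - (u0 : H)) = 0 := by
    simp only [map_sub]; ring
  have e2 : a y ((u0 : H) - y) + a (u0 : H) (y - (u0 : H))
      = -(a (y - (u0 : H)) (y - (u0 : H))) := by
    simp only [map_sub, ContinuousLinearMap.sub_apply]; ring
  have h3 := hcoer (y - (u0 : H))
  have h4 : α * ‖y - (u0 : H)‖ ^ 2 ≤ α * 0 := by linarith
  have h5 : ‖y - (u0 : H)‖ ^ 2 ≤ 0 := le_of_mul_le_mul_left h4 hα
  have h6 : ‖y - (u0 : H)‖ ^ 2 = 0 := le_antisymm h5 (sq_nonneg _)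
  have h7 : ‖y - (u0 : H)‖ = 0 := by
    exact pow_eq_zero_iff (two_ne_zero) |>.1 h6
  have : y - (u0 : H) = 0 := norm_eq_zero.1 h7
  exact sub_eq_zero.1 this
end
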